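/- Under the continuous-time minimum-consensus dynamics ẋ_i(t) = min_{j ∈ N_i ∪ {i}} a_j(t)·(x_j(t) − x_i(t)), with each weight function a_j continuous and uniformly bounded above and below by positive constants, every node's state converges as t → ∞ to the minimum of the initial states: lim_{t→∞} x_i(t) = min_{1 ≤ j ≤ n} x_j(0) for every node i. -/
import Mathlib


open Filter Topology Set

/-- If each `f i` is differentiable on `[a,b]` and at every point of `[a,b)` every index
achieving the maximum has nonpositive derivative, then the pointwise sup is bounded by
its initial value. -/
lemma sup'_decay {ι : Type*} [Fintype ι] [Nonempty ι]
    (f f' : ι → ℝ → ℝ) (a b : ℝ)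
    (hder : ∀ i, ∀ t ∈ Icc a b, HasDerivAt (f i) (f' i t) t)
    (hact : ∀ t ∈ Ico a b, ∀ i, (∀ j, f j t ≤ f i t) → f' i t ≤ 0) :
    ∀ t ∈ Icc a b,
      (Finset.univ.sup' Finset.univ_nonempty fun i => f i t)
        ≤ Finset.univ.sup' Finset.univ_nonempty fun i => f i a := by
  set F : ℝ → ℝ := fun t => Finset.univ.sup' Finset.univ_nonempty fun i => f i t with hF
  have hFcont : ContinuousOn F (Icc a b) := fun t ht =>
    ContinuousWithinAt.finset_sup'_apply _ fun i _ =>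
      ((hder i t ht).continuousAt).continuousWithinAt
  intro t ht
  refine image_le_of_liminf_slope_right_le_deriv_boundary (B := fun _ => F a)
    (B' := fun _ => 0) hFcont le_rfl continuousOn_const
    (fun s _ => hasDerivWithinAt_const s _ (F a)) ?_ ht
  intro s hs r hr
  refine Filter.Eventually.frequently ?_
  have hmem : Ioi s ∈ 𝓝[>] s := self_mem_nhdsWithin
  have hiv : ∀ i : ι, ∀ᶠ z in 𝓝[>] s, f i z < F s + r * (z - s) := by
    intro i
    have hle : f i s ≤ F s := Finset.le_sup' (fun j => f j s) (Finset.mem_univ i)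
    rcases eq_or_lt_of_le hle with heq | hlt
    · -- active index: use the derivative bound
      have hia : ∀ j, f j s ≤ f i s := fun j =>
        heq ▸ Finset.le_sup' (fun j => f j s) (Finset.mem_univ j)
      have hd : f' i s ≤ 0 := hact s hs i hia
      have hslope : Tendsto (slope (f i) s) (𝓝[≠] s) (𝓝 (f' i s)) :=
        hasDerivAt_iff_tendsto_slope.1 (hder i s (Ico_subset_Icc_self hs))
      have h1 : ∀ᶠ z in 𝓝[≠] s, slope (f i) s z < r :=
        hslope.eventually_lt_const (lt_of_le_of_lt hd hr)
      have h2 : ∀ᶠ z in 𝓝[>] s, slope (f i) s z < r :=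
        h1.filter_mono (nhdsWithin_mono s fun z hz => ne_of_gt hz)
      filter_upwards [h2, hmem] with z hz hzs
      have hzs' : 0 < z - s := sub_pos.2 hzs
      rw [slope_def_field] at hz
      have hz' := (div_lt_iff₀ hzs').1 hz
      have := heq
      nlinarith
    · -- inactive index: use continuity
      have hc : Tendsto (f i) (𝓝 s) (𝓝 (f i s)) :=
        (hder i s (Ico_subset_Icc_self hs)).continuousAt
      have hrhs : Tendsto (fun z => F s + r * (z - s)) (𝓝 s) (𝓝 (F s)) := by
        have : Tendsto (fun z : ℝ => F s + r * (z - s)) (𝓝 s) (𝓝 (F s + r * (s - s))) :=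
          Tendsto.add tendsto_const_nhds
            (Tendsto.const_mul r (tendsto_id.sub tendsto_const_nhds))
        simpa using this
      exact (hc.eventually_lt hrhs hlt).filter_mono nhdsWithin_le_nhds
  have hall : ∀ᶠ z in 𝓝[>] s, ∀ i ∈ Finset.univ, f i z < F s + r * (z - s) :=
    (eventually_all_finset _).2 fun i _ => hiv i
  filter_upwards [hall, hmem] with z hz hzs
  have hzs' : 0 < z - s := sub_pos.2 hzs
  have hFz : F z < F s + r * (z - s) :=
    (Finset.sup'_lt_iff _).2 fun i hi => hz i hi
  rw [slope_def_field]
  exact (div_lt_iff₀ hzs').2 (by linarith)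

/-- Continuous-time minimum consensus: under the dynamics
ẋ_i(t) = min_{j ∈ N_i ∪ {i}} a_j(t)·(x_j(t) − x_i(t)) with continuous weight
functions uniformly bounded in [δ, ā] with 0 < δ ≤ ā, every node's state
converges to the minimum of the initial states. -/
theorem ct_minimum_consensus
    (n : ℕ) (hn : 2 ≤ n)
    (G : SimpleGraph (Fin n)) [DecidableRel G.Adj]
    (hconn : G.Connected)
    (x : ℝ → Fin n → ℝ)
    (a : Fin n → ℝ → ℝ)
    (ha_cont : ∀ j, Continuous (a j))
    (δ abar : ℝ) (hδ : 0 < δ) (hδa : δ ≤ abar)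
    (hbound : ∀ j, ∀ t : ℝ, 0 ≤ t → δ ≤ a j t ∧ a j t ≤ abar)
    (hdyn : ∀ i, ∀ t : ℝ, 0 ≤ t →
      HasDerivAt (fun s => x s i)
        ((insert i (G.neighborFinset i)).inf'
          (Finset.insert_nonempty i _) (fun j => a j t * (x t j - x t i))) t) :
    ∀ i, Tendsto (fun t => x t i) atTop
      (𝓝 (Finset.univ.inf' (Finset.univ_nonempty_iff.mpr ⟨⟨0, by omega⟩⟩)
            (fun j => x 0 j))) := by
  haveI hne : Nonempty (Fin n) := ⟨⟨0, by omega⟩⟩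
  have he : (Finset.univ : Finset (Fin n)).Nonempty :=
    Finset.univ_nonempty_iff.mpr ⟨⟨0, by omega⟩⟩
  set m : ℝ := Finset.univ.inf' he (fun j => x 0 j) with hm
  set D : Fin n → ℝ → ℝ := fun i t => (insert i (G.neighborFinset i)).inf'
      (Finset.insert_nonempty i _) (fun j => a j t * (x t j - x t i)) with hD
  have hdyn' : ∀ i, ∀ t : ℝ, 0 ≤ t → HasDerivAt (fun s => x s i) (D i t) t := hdyn
  have hDnonpos : ∀ i t, 0 ≤ t → D i t ≤ 0 := by
    intro i t ht
    have h : (insert i (G.neighborFinset i)).inf' (Finset.insert_nonempty i _)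
        (fun j => a j t * (x t j - x t i)) ≤ a i t * (x t i - x t i) :=
      Finset.inf'_le _ (Finset.mem_insert_self i _)
    rw [hD]
    simpa using h
  have hanti : ∀ i, AntitoneOn (fun t => x t i) (Set.Ici 0) := by
    intro i
    apply antitoneOn_of_deriv_nonpos (convex_Ici 0)
    · intro t ht; exact ((hdyn' i t ht).continuousAt).continuousWithinAt
    · intro t ht
      rw [interior_Ici] at ht
      exact ((hdyn' i t (le_of_lt ht)).differentiableAt).differentiableWithinAt
    · intro t ht
      rw [interior_Ici] at ht
      rw [(hdyn' i t (le_of_lt ht)).deriv]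
      exact hDnonpos i t (le_of_lt ht)
  -- lower bound: states never go below m
  have hlow : ∀ t : ℝ, 0 ≤ t → ∀ i, m ≤ x t i := by
    intro t ht i
    have key := sup'_decay (fun i s => -(x s i)) (fun i s => -(D i s)) 0 t
      (fun i s hs => (hdyn' i s hs.1).neg)
      (by
        intro s hs i hia
        have : 0 ≤ D i s := by
          apply Finset.le_inf'
          intro j _
          have h1 : δ ≤ a j s := (hbound j s hs.1).1
          have h' : -(x s j) ≤ -(x s i) := hia j
          exact mul_nonneg (le_trans hδ.le h1) (sub_nonneg.2 (by linarith))
        show -D i s ≤ 0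
        linarith)
      t ⟨ht, le_rfl⟩
    beta_reduce at key
    obtain ⟨j0, -, hj0⟩ := Finset.exists_mem_eq_sup'
      (Finset.univ_nonempty (α := Fin n)) (fun j => -(x 0 j))
    have h1 : -(x t i) ≤ Finset.univ.sup' Finset.univ_nonempty fun j => -(x t j) :=
      Finset.le_sup' (fun j => -(x t j)) (Finset.mem_univ i)
    have h2 : m ≤ x 0 j0 := Finset.inf'_le _ (Finset.mem_univ j0)
    rw [hj0] at key
    linarith [le_trans h1 key]
  -- truncated trajectories and limits
  set z : Fin n → ℝ → ℝ := fun i t => x (max t 0) i with hz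
  have hz_eq : ∀ i, ∀ t : ℝ, 0 ≤ t → z i t = x t i := by
    intro i t ht; simp [hz, max_eq_left ht]
  have hz_anti : ∀ i, Antitone (z i) := by
    intro i s t hst
    exact hanti i (le_max_right s 0) (le_max_right t 0) (max_le_max hst le_rfl)
  have hz_bdd : ∀ i, BddBelow (Set.range (z i)) := by
    intro i
    refine ⟨m, ?_⟩
    rintro _ ⟨t, rfl⟩
    exact hlow _ (le_max_right t 0) i
  set L : Fin n → ℝ := fun i => ⨅ t, z i t with hL
  have hLtend : ∀ i, Tendsto (z i) atTop (𝓝 (L i)) := fun i =>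
    tendsto_atTop_ciInf (hz_anti i) (hz_bdd i)
  have hmL : ∀ i, m ≤ L i := fun i => le_ciInf fun t => hlow _ (le_max_right t 0) i
  have hLz : ∀ i t, L i ≤ z i t := fun i t => ciInf_le (hz_bdd i) t
  -- the base node
  obtain ⟨j0, -, hj0⟩ := Finset.exists_mem_eq_inf' he (fun j => x 0 j)
  have hbase : L j0 = m := by
    have hconst : ∀ t : ℝ, z j0 t = m := by
      intro t
      have h1 : x (max t 0) j0 ≤ x 0 j0 :=
        hanti j0 (le_refl (0 : ℝ)) (le_max_right t 0) (le_max_right t 0)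
      have h2 : m ≤ x (max t 0) j0 := hlow _ (le_max_right t 0) j0
      have h3 : z j0 t = x (max t 0) j0 := rfl
      rw [← hm] at hj0
      linarith
    have : (⨅ t : ℝ, z j0 t) = ⨅ _ : ℝ, m := iInf_congr hconst
    rw [hL]
    simpa [ciInf_const] using this
  -- propagation along edges
  have hstep : ∀ i k, G.Adj i k → L i = m → L k = m := by
    intro i k hadj hLi
    by_contra hne
    have hk : m < L k := lt_of_le_of_ne (hmL k) (Ne.symm hne)
    set ε : ℝ := (L k - m) / 2 with hε
    have hεpos : 0 < ε := by simp [hε]; linarith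
    have hev : ∀ᶠ t in atTop, z i t < m + ε := by
      refine (hLtend i).eventually_lt_const ?_
      rw [hLi]; linarith
    obtain ⟨T0, hT0⟩ := eventually_atTop.1 hev
    set T : ℝ := max T0 0 with hT
    have hT0' : (0 : ℝ) ≤ T := le_max_right T0 0
    set c : ℝ := δ * ε with hc
    have hcpos : 0 < c := mul_pos hδ hεpos
    have hxi : ∀ t, T ≤ t → x t i < m + ε := by
      intro t ht
      have h := hT0 t (le_trans (le_max_left T0 0) ht)
      rwa [hz_eq i t (le_trans hT0' ht)] at h
    have hxk : ∀ t, T ≤ t → L k ≤ x t k := by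
      intro t ht
      have h := hLz k t
      rwa [hz_eq k t (le_trans hT0' ht)] at h
    have hDk : ∀ t, T ≤ t → D k t ≤ -c := by
      intro t ht
      have ht0 : (0 : ℝ) ≤ t := le_trans hT0' ht
      have hmem : i ∈ insert k (G.neighborFinset k) :=
        Finset.mem_insert_of_mem ((G.mem_neighborFinset k i).2 hadj.symm)
      have h1 : D k t ≤ a i t * (x t i - x t k) :=
        Finset.inf'_le (fun j => a j t * (x t j - x t k)) hmem
      have hu : x t i - x t k ≤ -ε := by
        have := hxi t ht
        have := hxk t ht
        rw [hε] at *
        linarith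
      have hu0 : x t i - x t k ≤ 0 := le_trans hu (by linarith)
      have h2 : a i t * (x t i - x t k) ≤ δ * (x t i - x t k) :=
        mul_le_mul_of_nonpos_right (hbound i t ht0).1 hu0
      have h3 : δ * (x t i - x t k) ≤ δ * (-ε) :=
        mul_le_mul_of_nonneg_left hu hδ.le
      have h4 : δ * (-ε) = -c := by rw [hc]; ring
      linarith
    -- the function x t k + c * t is antitone on [T, ∞)
    have hg : ∀ t : ℝ, 0 ≤ t → HasDerivAt (fun s => x s k + c * s) (D k t + c) t := by
      intro t ht
      have h1 := hdyn' k t ht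
      have h2 : HasDerivAt (fun s : ℝ => c * s) c t := by
        simpa using (hasDerivAt_id t).const_mul c
      exact h1.add h2
    have hganti : AntitoneOn (fun s => x s k + c * s) (Set.Ici T) := by
      apply antitoneOn_of_deriv_nonpos (convex_Ici T)
      · intro t ht
        exact ((hg t (le_trans hT0' ht)).continuousAt).continuousWithinAt
      · intro t ht
        rw [interior_Ici] at ht
        exact ((hg t (le_trans hT0' ht.le)).differentiableAt).differentiableWithinAt
      · intro t ht
        rw [interior_Ici] at ht
        rw [(hg t (le_trans hT0' ht.le)).deriv]
        have := hDk t ht.le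
        linarith
    set s : ℝ := max T ((x T k + c * T - m) / c + 1) with hs
    have hsT : T ≤ s := le_max_left _ _
    have hmono := hganti (le_refl T) hsT hsT
    have hcs : x T k + c * T - m + c ≤ c * s := by
      have h1 : (x T k + c * T - m) / c + 1 ≤ s := le_max_right _ _
      have h2 := mul_le_mul_of_nonneg_left h1 hcpos.le
      have h3 : c * ((x T k + c * T - m) / c + 1) = x T k + c * T - m + c := by
        field_simp
      linarith
    have hxs : x s k < m := by
      simp only at hmono
      linarith
    exact absurd (hlow s (le_trans hT0' hsT) k) (not_le.2 hxs)
  -- connectivity spreads the limit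
  have hall : ∀ k, L k = m := by
    intro k
    obtain ⟨w⟩ := hconn j0 k
    have key : ∀ (u v : Fin n) (w : G.Walk u v), L u = m → L v = m := by
      intro u v w
      induction w with
      | nil => exact id
      | cons h p ih => intro hu; exact ih (hstep _ _ h hu)
    exact key j0 k w hbase
  -- conclusion
  intro i
  have htend : Tendsto (z i) atTop (𝓝 m) := hall i ▸ hLtend i
  refine htend.congr' ?_
  filter_upwards [eventually_ge_atTop (0 : ℝ)] with t ht
  exact hz_eq i t ht
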